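/- Let (X,Y) be a mean-zero bivariate Gaussian vector with Var(X) = Var(Y) = 1 and correlation ρ. Then E[|X||Y|] = (2/π)(ρ·arcsin(ρ) + sqrt(1-ρ²)). -/

import Mathlib

/-!
Write `ρ = cos φ` and `√(1 - ρ²) = sin φ` with `φ = arccos ρ`. The integrand `|X| |Y|` is a
function of the standard Gaussian vector `(Z₁, Z₂)` that is positively homogeneous of degree 2,
so polar coordinates split its expectation into the radial moment
`(2π)⁻¹ ∫₀^∞ r³ e^{-r²/2} dr = π⁻¹` times the angular integral
`∫_{-π}^{π} |sin (θ + φ)| |sin θ| dθ`.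
The latter is π-periodic, and on `[0, π]` the factor `sin (θ + φ)` changes sign only at `π - φ`;
integrating `sin (θ + φ) sin θ = (cos φ - cos (2θ + φ)) / 2` piecewise gives
`2 ((π/2 - φ) cos φ + sin φ) = 2 (ρ arcsin ρ + √(1 - ρ²))`.
-/

open MeasureTheory ProbabilityTheory Real Set

section Angular

open intervalIntegral

lemma integral_sin_add_mul_sin (c a b : ℝ) :
    ∫ t in a..b, sin (t + c) * sin t =
      (b * cos c / 2 - sin (2 * b + c) / 4) - (a * cos c / 2 - sin (2 * a + c) / 4) := by
  refine integral_eq_sub_of_hasDerivAt (f := fun t => t * cos c / 2 - sin (2 * t + c) / 4)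
    (fun t _ => ?_) ((by fun_prop : Continuous fun t => sin (t + c) * sin t).intervalIntegrable _ _)
  refine ((((hasDerivAt_id t).mul_const (cos c)).div_const 2).sub
    ((((hasDerivAt_id t).const_mul 2).add_const c).sin.div_const 4)).congr_deriv ?_
  -- `c = (t + c) - t` and `2 * t + c = (t + c) + t`: product-to-sum
  rw [id, show 2 * t + c = t + c + t by ring, cos_add]
  nth_rw 1 [show c = t + c - t by ring]
  rw [cos_sub]
  ring

lemma integral_abs_sin_add_mul_sin {φ : ℝ} (h0 : 0 ≤ φ) (hπ : φ ≤ π) :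
    ∫ θ in 0..π, |sin (θ + φ)| * sin θ = (π / 2 - φ) * cos φ + sin φ := by
  have hpos : EqOn (fun θ => |sin (θ + φ)| * sin θ) (fun θ => sin (θ + φ) * sin θ)
      (uIcc 0 (π - φ)) := by
    intro θ hθ
    rw [uIcc_of_le (by linarith)] at hθ
    dsimp only
    rw [abs_of_nonneg (sin_nonneg_of_nonneg_of_le_pi (by linarith [hθ.1]) (by linarith [hθ.2]))]
  have hneg : EqOn (fun θ => |sin (θ + φ)| * sin θ) (fun θ => -(sin (θ + φ) * sin θ))
      (uIcc (π - φ) π) := by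
    intro θ hθ
    rw [uIcc_of_le (by linarith)] at hθ
    have hsin : sin (θ + φ) ≤ 0 := by
      rw [← neg_nonneg, ← sin_sub_pi]
      exact sin_nonneg_of_nonneg_of_le_pi (by linarith [hθ.1]) (by linarith [hθ.2])
    dsimp only
    rw [abs_of_nonpos hsin, neg_mul]
  rw [← integral_add_adjacent_intervals (b := π - φ)
      (Continuous.intervalIntegrable (by fun_prop) _ _)
      (Continuous.intervalIntegrable (by fun_prop) _ _),
    integral_congr hpos, integral_congr hneg, intervalIntegral.integral_neg,
    integral_sin_add_mul_sin, integral_sin_add_mul_sin,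
    show 2 * (π - φ) + φ = -(φ - 2 * π) by ring, sin_neg, sin_sub_two_pi,
    show 2 * π + φ = φ + 2 * π by ring, sin_add_two_pi]
  simp only [mul_zero, zero_add, zero_mul]
  ring

lemma integral_abs_sin_add_mul_abs_sin {φ : ℝ} (h0 : 0 ≤ φ) (hπ : φ ≤ π) :
    ∫ θ in -π..π, |sin (θ + φ)| * |sin θ| = 2 * ((π / 2 - φ) * cos φ + sin φ) := by
  have hperiod :
      ∫ θ in -π..0, |sin (θ + φ)| * |sin θ| = ∫ θ in 0..π, |sin (θ + φ)| * |sin θ| :=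
    calc _ = ∫ θ in 0..π, |sin (θ - π + φ)| * |sin (θ - π)| := by
          rw [integral_comp_sub_right (fun θ => |sin (θ + φ)| * |sin θ|), zero_sub, sub_self]
      _ = _ := by simp only [sub_add_eq_add_sub, sin_sub_pi, abs_neg]
  have habs : EqOn (fun θ => |sin (θ + φ)| * |sin θ|) (fun θ => |sin (θ + φ)| * sin θ)
      (uIcc 0 π) := by
    intro θ hθ
    rw [uIcc_of_le pi_nonneg] at hθ
    dsimp only
    rw [abs_of_nonneg (sin_nonneg_of_nonneg_of_le_pi hθ.1 hθ.2)]
  rw [← integral_add_adjacent_intervals (b := 0)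
      (Continuous.intervalIntegrable (by fun_prop) _ _)
      (Continuous.intervalIntegrable (by fun_prop) _ _),
    hperiod, integral_congr habs, integral_abs_sin_add_mul_sin h0 hπ]
  ring

lemma integral_abs_sqrt_one_sub_sq_mul_cos_add_mul_sin_mul_abs_sin {ρ : ℝ}
    (hρ : ρ ∈ Icc (-1) 1) :
    ∫ θ in -π..π, |√(1 - ρ ^ 2) * cos θ + ρ * sin θ| * |sin θ|
      = 2 * (ρ * arcsin ρ + √(1 - ρ ^ 2)) := by
  have hsin_add (θ : ℝ) : √(1 - ρ ^ 2) * cos θ + ρ * sin θ = sin (θ + arccos ρ) := by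
    rw [sin_add, cos_arccos hρ.1 hρ.2, sin_arccos]
    ring
  simp only [hsin_add]
  rw [integral_abs_sin_add_mul_abs_sin (arccos_nonneg ρ) (arccos_le_pi ρ), cos_arccos hρ.1 hρ.2,
    sin_arccos, arccos_eq_pi_div_two_sub_arcsin]
  ring

end Angular

lemma integral_Ioi_pow_three_mul_exp_neg_sq_div_two :
    ∫ r in Ioi (0 : ℝ), r ^ 3 * exp (-r ^ 2 / 2) = 2 := by
  have h := integral_rpow_mul_exp_neg_mul_rpow (p := 2) (q := 3) (b := 1 / 2)
    two_pos (by norm_num) one_half_pos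
  norm_num [Gamma_two] at h
  convert h using 5
  ring

lemma gaussianPDFReal_zero_one_mul (x y : ℝ) :
    gaussianPDFReal 0 1 x * gaussianPDFReal 0 1 y
      = (2 * π)⁻¹ * exp (-(x ^ 2 + y ^ 2) / 2) := by
  have hsq : (√(2 * π))⁻¹ * (√(2 * π))⁻¹ = (2 * π)⁻¹ := by
    rw [← mul_inv, mul_self_sqrt (by positivity)]
  simp only [gaussianPDFReal, NNReal.coe_one, mul_one, sub_zero]
  rw [← hsq, neg_add, add_div, exp_add]
  ring

lemma integral_gaussianReal_prod_gaussianReal (f : ℝ × ℝ → ℝ) :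
    ∫ p, f p ∂(gaussianReal 0 1).prod (gaussianReal 0 1)
      = ∫ p, ((2 * π)⁻¹ * exp (-(p.1 ^ 2 + p.2 ^ 2) / 2)) * f p := by
  rw [gaussianReal_of_var_ne_zero 0 one_ne_zero,
    prod_withDensity (measurable_gaussianPDF 0 1) (measurable_gaussianPDF 0 1),
    integral_withDensity_eq_integral_toReal_smul (by fun_prop)
      (ae_of_all _ fun _ => ENNReal.mul_lt_top gaussianPDF_lt_top gaussianPDF_lt_top),
    ← Measure.volume_eq_prod]
  simp only [ENNReal.toReal_mul, toReal_gaussianPDF, gaussianPDFReal_zero_one_mul, smul_eq_mul]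

lemma integral_gaussianReal_prod_gaussianReal_of_homogeneous (f : ℝ × ℝ → ℝ)
    (hf : ∀ r > 0, ∀ θ, f (r * cos θ, r * sin θ) = r ^ 2 * f (cos θ, sin θ)) :
    ∫ p, f p ∂(gaussianReal 0 1).prod (gaussianReal 0 1)
      = π⁻¹ * ∫ θ in -π..π, f (cos θ, sin θ) := by
  rw [integral_gaussianReal_prod_gaussianReal, ← integral_comp_polarCoord_symm]
  calc _ = ∫ p in Ioi 0 ×ˢ Ioo (-π) π,
        ((2 * π)⁻¹ * (p.1 ^ 3 * exp (-p.1 ^ 2 / 2))) * f (cos p.2, sin p.2) := by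
        rw [polarCoord_target]
        refine setIntegral_congr_fun (measurableSet_Ioi.prod measurableSet_Ioo) ?_
        rintro ⟨r, θ⟩ ⟨hr, -⟩
        simp only [polarCoord_symm_apply, smul_eq_mul, hf r hr, mul_pow]
        rw [← mul_add, cos_sq_add_sin_sq]
        ring_nf
    _ = π⁻¹ * ∫ θ in -π..π, f (cos θ, sin θ) := by
        rw [Measure.volume_eq_prod,
          setIntegral_prod_mul (fun r => (2 * π)⁻¹ * (r ^ 3 * exp (-r ^ 2 / 2)))
            (fun θ => f (cos θ, sin θ)),
          integral_const_mul, integral_Ioi_pow_three_mul_exp_neg_sq_div_two,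
          intervalIntegral.integral_of_le (by linarith [pi_pos]), integral_Ioc_eq_integral_Ioo]
        field_simp

lemma ProbabilityTheory.IndepFun.integral_comp_eq_integral_prod {Ω α β E : Type*}
    [MeasurableSpace Ω] [MeasurableSpace α] [MeasurableSpace β]
    [NormedAddCommGroup E] [NormedSpace ℝ E]
    {μ : Measure Ω} [IsFiniteMeasure μ] {X : Ω → α} {Y : Ω → β} (hXY : IndepFun X Y μ)
    (hX : AEMeasurable X μ) (hY : AEMeasurable Y μ) {g : α × β → E}
    (hg : AEStronglyMeasurable g ((μ.map X).prod (μ.map Y))) :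
    ∫ ω, g (X ω, Y ω) ∂μ = ∫ p, g p ∂(μ.map X).prod (μ.map Y) := by
  rw [← (indepFun_iff_map_prod_eq_prod_map_map hX hY).mp hXY] at hg ⊢
  exact (integral_map (hX.prodMk hY) hg).symm

theorem nabeya_abs_moment_bivariate_gaussian
    {Ω : Type*} [MeasurableSpace Ω] (μ : Measure Ω) [IsProbabilityMeasure μ]
    (Z₁ Z₂ : Ω → ℝ) (hZ₁ : Measurable Z₁) (hZ₂ : Measurable Z₂)
    (hZ₁law : Measure.map Z₁ μ = gaussianReal 0 1)
    (hZ₂law : Measure.map Z₂ μ = gaussianReal 0 1)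
    (hindep : IndepFun Z₁ Z₂ μ)
    (ρ : ℝ) (hρ : ρ ∈ Set.Icc (-1 : ℝ) 1)
    (X Y : Ω → ℝ)
    (hX : X = fun ω => Real.sqrt (1 - ρ ^ 2) * Z₁ ω + ρ * Z₂ ω)
    (hY : Y = Z₂) :
    ∫ ω, |X ω| * |Y ω| ∂μ = (2 / π) * (ρ * arcsin ρ + Real.sqrt (1 - ρ ^ 2)) := by
  subst X Y
  set f : ℝ × ℝ → ℝ := fun p => |√(1 - ρ ^ 2) * p.1 + ρ * p.2| * |p.2|
  have hf_homogeneous : ∀ r > 0, ∀ θ, f (r * cos θ, r * sin θ) = r ^ 2 * f (cos θ, sin θ) := by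
    intro r hr θ
    simp only [f, show √(1 - ρ ^ 2) * (r * cos θ) + ρ * (r * sin θ)
      = r * (√(1 - ρ ^ 2) * cos θ + ρ * sin θ) by ring, abs_mul, abs_of_pos hr]
    ring
  calc ∫ ω, |√(1 - ρ ^ 2) * Z₁ ω + ρ * Z₂ ω| * |Z₂ ω| ∂μ
      = ∫ p, f p ∂(gaussianReal 0 1).prod (gaussianReal 0 1) := by
        rw [hindep.integral_comp_eq_integral_prod (g := f) hZ₁.aemeasurable hZ₂.aemeasurable
          (by fun_prop), hZ₁law, hZ₂law]
    _ = (2 / π) * (ρ * arcsin ρ + √(1 - ρ ^ 2)) := by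
        rw [integral_gaussianReal_prod_gaussianReal_of_homogeneous f hf_homogeneous,
          integral_abs_sqrt_one_sub_sq_mul_cos_add_mul_sin_mul_abs_sin hρ]
        ring
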